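/- arXiv:2202.07770 — 4 statements merged into one kernel-verified Lean document; each statement's English description precedes it below -/
import Mathlib

section
/- Let Y be a topological space with set of branch points Σ, and let z ∈ Σ. Then the subset A_z := (Y \ Σ) ∪ {z}, with the subspace topology, is a Hausdorff space. -/
def hcl {Y : Type*} [TopologicalSpace Y] (z : Y) : Set Y :=
  ⋂ V ∈ nhds z, closure V

def branchPoints (Y : Type*) [TopologicalSpace Y] : Set Y :=
  {z : Y | hcl z ≠ {z}}

lemma mem_hcl_self {Y : Type*} [TopologicalSpace Y] (z : Y) : z ∈ hcl z := by
  simp only [hcl, Set.mem_iInter]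
  exact fun V hV => subset_closure (mem_of_mem_nhds hV)

lemma sep_of_not_branch {Y : Type*} [TopologicalSpace Y] {p q : Y}
    (hpq : p ≠ q) (hp : p ∉ branchPoints Y) :
    ∃ u v : Set Y, IsOpen u ∧ IsOpen v ∧ p ∈ u ∧ q ∈ v ∧ Disjoint u v := by
  have h : hcl p = {p} := not_not.mp hp
  have hq : q ∉ hcl p := by rw [h]; exact fun hq => hpq (hq.symm)
  simp only [hcl, Set.mem_iInter, not_forall] at hq
  obtain ⟨V, hV, hqV⟩ := hq
  refine ⟨interior V, (closure V)ᶜ, isOpen_interior, isClosed_closure.isOpen_compl,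
    mem_interior_iff_mem_nhds.mpr hV, hqV, ?_⟩
  exact Set.disjoint_left.mpr fun x hx hx' => hx' (subset_closure (interior_subset hx))

theorem t2_complement_branchPoints_with_one {Y : Type*} [TopologicalSpace Y]
    (z : Y) (hz : z ∈ branchPoints Y) :
    T2Space (((branchPoints Y)ᶜ ∪ {z} : Set Y)) := by
  constructor
  rintro ⟨a, ha⟩ ⟨b, hb⟩ hne
  have hab : a ≠ b := fun h => hne (Subtype.ext h)
  have key : ∀ u v : Set Y, IsOpen u → IsOpen v → a ∈ u → b ∈ v → Disjoint u v →
      ∃ u' v', IsOpen u' ∧ IsOpen v' ∧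
        (⟨a, ha⟩ : ((branchPoints Y)ᶜ ∪ {z} : Set Y)) ∈ u' ∧
        (⟨b, hb⟩ : ((branchPoints Y)ᶜ ∪ {z} : Set Y)) ∈ v' ∧ Disjoint u' v' := by
    intro u v hu hv hau hbv hd
    exact ⟨Subtype.val ⁻¹' u, Subtype.val ⁻¹' v,
      hu.preimage continuous_subtype_val, hv.preimage continuous_subtype_val,
      hau, hbv, hd.preimage _⟩
  rcases ha with ha | ha
  · obtain ⟨u, v, hu, hv, hau, hbv, hd⟩ := sep_of_not_branch hab ha
    exact key u v hu hv hau hbv hd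
  · rcases hb with hb | hb
    · obtain ⟨u, v, hu, hv, hbu, hav, hd⟩ := sep_of_not_branch hab.symm hb
      exact key v u hv hu hav hbu hd.symm
    · exact absurd (ha.trans hb.symm) hab
end

section
/- Let Y be a topological space with set of branch points Σ. If A ⊆ Y is a compact subset, then closure(A) ⊆ A ∪ Σ. -/
theorem closure_compact_subset {Y : Type*} [TopologicalSpace Y] (A : Set Y)
    (hA : IsCompact A) : closure A ⊆ A ∪ branchPoints Y := by
  intro x hx
  by_cases hb : x ∈ branchPoints Y
  · exact Or.inr hb
  · left
    have hcl_eq : hcl x = {x} := not_not.mp hb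
    by_contra hxA
    -- for each a ∈ A, a ≠ x, so a ∉ hcl x
    have key : ∀ a : A, ∃ V ∈ nhds x, (a : Y) ∉ closure V := by
      intro a
      have hne : (a : Y) ∉ hcl x := by
        rw [hcl_eq]
        intro h
        exact hxA (h ▸ a.2)
      simpa [hcl, Set.mem_iInter] using hne
    choose V hV hVa using key
    have hcover : A ⊆ ⋃ a : A, (closure (V a))ᶜ := by
      intro y hy
      exact Set.mem_iUnion.mpr ⟨⟨y, hy⟩, hVa ⟨y, hy⟩⟩
    obtain ⟨t, ht⟩ := hA.elim_finite_subcover (fun a : A => (closure (V a))ᶜ)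
      (fun a => isClosed_closure.isOpen_compl) hcover
    have hW : (⋂ a ∈ t, V a) ∈ nhds x := by
      exact (Filter.biInter_finset_mem t).mpr fun a _ => hV a
    obtain ⟨y, hyW, hyA⟩ := mem_closure_iff_nhds.mp hx _ hW
    obtain ⟨a, hat, hya⟩ := Set.mem_iUnion₂.mp (ht hyA)
    exact hya (subset_closure (Set.mem_iInter₂.mp hyW a hat))
end

section
/- Let Y be a topological space with set of branch points Σ. If A is a compact subset of Y contained in Y \ Σ, then A is closed in Y. -/
theorem isClosed_of_compact_disjoint_branchPoints {Y : Type*} [TopologicalSpace Y]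
    (A : Set Y) (hA : IsCompact A) (hAS : A ⊆ (branchPoints Y)ᶜ) :
    IsClosed A := by
  rw [← isOpen_compl_iff, isOpen_iff_mem_nhds]
  intro y hy
  -- for each a ∈ A, choose V a ∈ 𝓝 a with y ∉ closure (V a)
  have key : ∀ a ∈ A, ∃ V ∈ nhds a, y ∉ closure V := by
    intro a ha
    have h1 : hcl a = {a} := not_not.mp (hAS ha)
    have h2 : y ∉ hcl a := by
      rw [h1]; intro h; exact hy (h ▸ ha)
    simpa [hcl, Set.mem_iInter] using h2
  choose! V hV hyV using key
  obtain ⟨t, ht, hcov⟩ := hA.elim_nhds_subcover V hV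
  refine Filter.mem_of_superset (x := ⋂ a ∈ t, (closure (V a))ᶜ) ?_ ?_
  · exact (Filter.biInter_finset_mem t).mpr fun a ha =>
      mem_nhds_iff.mpr ⟨(closure (V a))ᶜ, le_refl _, isClosed_closure.isOpen_compl,
        hyV a (ht a ha)⟩
  · intro x hx hxA
    obtain ⟨a, hat, hxa⟩ := Set.mem_iUnion₂.mp (hcov hxA)
    exact (Set.mem_iInter₂.mp hx a hat) (subset_closure hxa)
end

section
/- Let Y be a T1, locally connected topological space whose set Σ of branch points is locally finite, and let C be a connected component of Y \ Σ. If C is compact, then C is both open and closed in Y, hence C is a connected component of Y (when Y is connected it must equal Y). -/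
lemma hcl_symm {Y : Type*} [TopologicalSpace Y] {y z : Y} (h : y ∈ hcl z) :
    z ∈ hcl y := by
  simp only [hcl, Set.mem_iInter] at h ⊢
  intro W hW
  rw [mem_closure_iff_nhds]
  intro V hV
  have := h V hV
  rw [mem_closure_iff_nhds] at this
  obtain ⟨w, hw1, hw2⟩ := this W hW
  exact ⟨w, hw2, hw1⟩

lemma isClosed_of_compact_nonbranch {Y : Type*} [TopologicalSpace Y]
    {K : Set Y} (hK : IsCompact K) (hKb : K ⊆ (branchPoints Y)ᶜ) :
    IsClosed K := by
  rw [← closure_subset_iff_isClosed]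
  intro z hz
  by_contra hzK
  -- every y ∈ K is not in hcl z
  have key : ∀ y ∈ K, ∃ V ∈ nhds z, y ∉ closure V := by
    intro y hy
    by_contra hcon
    push_neg at hcon
    have hyh : y ∈ hcl z := by
      simp only [hcl, Set.mem_iInter]; exact hcon
    have hzy : z ∈ hcl y := hcl_symm hyh
    have hyz : y ≠ z := fun h => hzK (h ▸ hy)
    have : y ∈ branchPoints Y := by
      intro heq
      rw [heq] at hzy
      exact hyz (hzy.symm)
    exact hKb hy this
  choose V hVn hVc using key
  obtain ⟨t, hcov⟩ := hK.elim_nhds_subcover'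
    (fun y hy => (closure (V y hy))ᶜ)
    (fun y hy => ((isClosed_closure).isOpen_compl).mem_nhds (hVc y hy))
  -- the finite intersection of the V's is a nhds of z disjoint from K
  have hVin : (⋂ y ∈ t, V y.1 y.2) ∈ nhds z := by
    refine (Filter.biInter_finset_mem t).2 ?_
    intro y _
    exact hVn y.1 y.2
  rw [mem_closure_iff_nhds] at hz
  obtain ⟨w, hw1, hw2⟩ := hz _ hVin
  obtain ⟨y, hy, hwy⟩ := Set.mem_iUnion₂.1 (hcov hw2)
  have : w ∈ closure (V y.1 y.2) :=
    subset_closure (Set.mem_iInter₂.1 hw1 y hy)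
  exact hwy this

theorem compact_component_is_clopen {Y : Type*} [TopologicalSpace Y]
    [T1Space Y] [LocallyConnectedSpace Y]
    (hlf : ∀ y : Y, ∃ U ∈ nhds y, (U ∩ branchPoints Y).Finite)
    (x : Y) (hx : x ∈ (branchPoints Y)ᶜ)
    (hC : IsCompact (connectedComponentIn (branchPoints Y)ᶜ x)) :
    IsOpen (connectedComponentIn (branchPoints Y)ᶜ x) ∧
    IsClosed (connectedComponentIn (branchPoints Y)ᶜ x) ∧
    connectedComponentIn (branchPoints Y)ᶜ x = connectedComponent x := by
  have hopenS : IsOpen (branchPoints Y)ᶜ := by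
    rw [isOpen_iff_mem_nhds]
    intro z hz
    obtain ⟨U, hU, hfin⟩ := hlf z
    have hclosed : IsClosed (U ∩ branchPoints Y) := hfin.isClosed
    have : interior U \ (U ∩ branchPoints Y) ∈ nhds z := by
      refine IsOpen.mem_nhds (isOpen_interior.sdiff hclosed) ?_
      exact ⟨mem_interior_iff_mem_nhds.2 hU, fun h => hz h.2⟩
    refine Filter.mem_of_superset this ?_
    rintro w ⟨hw1, hw2⟩ hwb
    exact hw2 ⟨interior_subset hw1, hwb⟩
  have hopen : IsOpen (connectedComponentIn (branchPoints Y)ᶜ x) :=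
    hopenS.connectedComponentIn
  have hclosed : IsClosed (connectedComponentIn (branchPoints Y)ᶜ x) :=
    isClosed_of_compact_nonbranch hC (connectedComponentIn_subset _ _)
  refine ⟨hopen, hclosed, ?_⟩
  apply Set.Subset.antisymm
  · exact (isPreconnected_connectedComponentIn).subset_connectedComponent
      (mem_connectedComponentIn hx)
  · exact IsClopen.connectedComponent_subset ⟨hclosed, hopen⟩
      (mem_connectedComponentIn hx)
end
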